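/- (HJB equation for the backward drift.) Let d ∈ ℕ, σ > 0, f : ℝ × ℝ^d → ℝ^d continuously differentiable in x, V : ℝ × ℝ^d → ℝ differentiable in t and twice continuously differentiable in x satisfying the Hamilton–Jacobi–Bellman equation ∂_t V + ⟨f, ∇V⟩ + (σ²/2)ΔV − (σ²/2)‖∇V‖² = 0 at every (t,x), and ρ : ℝ × ℝ^d → (0,∞) differentiable in t and twice continuously differentiable in x satisfying the Fokker–Planck equation ∂_t ρ(t,x) = −∇·(ρ(t,·)·(f(t,·) − σ²∇V(t,·)))(x) + (σ²/2)·Δρ(t,x) at every (t,x). Then ψ := log ρ + V satisfies the backward-drift HJB equation: for all (t,x), ∂_t ψ(t,x) + ⟨f(t,x), ∇ψ(t,x)⟩ + (∇·f(t,·))(x) − (σ²/2)·Δψ(t,x) − (σ²/2)·‖∇ψ(t,x)‖² = 0. -/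

import Mathlib

/-!
Write `ψ = log ρ + V`. The chain rule gives `∂ₜψ = ∂ₜρ / ρ + ∂ₜV`, `∇ψ = ∇ρ / ρ + ∇V` and
`Δψ = Δρ / ρ - ‖∇ρ‖² / ρ² + ΔV`, and the product rule expands the Fokker–Planck flux term as
`∇·(ρ (f - σ²∇V)) = ρ (∇·f - σ² ΔV) + ⟪∇ρ, f - σ²∇V⟫`. Dividing the Fokker–Planck equation by `ρ`
and adding the HJB equation for `V`, every term involving `ρ` cancels against the expansion of the
claimed expression for `ψ`.
-/

open scoped RealInnerProductSpace

/-- The Laplacian of `f : ℝ^d → ℝ` at `x`: trace of the second Fréchet derivative. -/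
noncomputable def lap {d : ℕ} (f : EuclideanSpace ℝ (Fin d) → ℝ)
    (x : EuclideanSpace ℝ (Fin d)) : ℝ :=
  ∑ i, fderiv ℝ (fderiv ℝ f) x (EuclideanSpace.single i 1) (EuclideanSpace.single i 1)

/-- The divergence of a vector field `w : ℝ^d → ℝ^d` at `x`: trace of the Fréchet
derivative of `w` at `x`. -/
noncomputable def diverg {d : ℕ} (w : EuclideanSpace ℝ (Fin d) → EuclideanSpace ℝ (Fin d))
    (x : EuclideanSpace ℝ (Fin d)) : ℝ :=
  ∑ i, ⟪fderiv ℝ w x (EuclideanSpace.single i 1), EuclideanSpace.single i 1⟫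

theorem ContDiff.differentiable_fderiv {𝕜 E F : Type*} [NontriviallyNormedField 𝕜]
    [NormedAddCommGroup E] [NormedSpace 𝕜 E] [NormedAddCommGroup F] [NormedSpace 𝕜 F]
    {f : E → F} (hf : ContDiff 𝕜 2 f) : Differentiable 𝕜 (fderiv 𝕜 f) :=
  (hf.fderiv_right (by norm_num)).differentiable one_ne_zero

section
variable {F : Type*} [NormedAddCommGroup F] [InnerProductSpace ℝ F] [CompleteSpace F]
  {f g : F → ℝ} {x : F}

theorem gradient_fun_add (hf : DifferentiableAt ℝ f x) (hg : DifferentiableAt ℝ g x) :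
    gradient (fun y => f y + g y) x = gradient f x + gradient g x := by
  simp only [gradient, fderiv_fun_add hf hg, map_add]

theorem gradient_log (hf : DifferentiableAt ℝ f x) (hx : f x ≠ 0) :
    gradient (fun y => Real.log (f y)) x = (f x)⁻¹ • gradient f x := by
  simp only [gradient, (hf.hasFDerivAt.log hx).fderiv, map_smul]

theorem differentiableAt_gradient (hf : DifferentiableAt ℝ (fderiv ℝ f) x) :
    DifferentiableAt ℝ (gradient f) x :=
  (InnerProductSpace.toDual ℝ F).symm.toContinuousLinearEquiv.differentiableAt.comp x hf

theorem inner_fderiv_gradient (u v : F) :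
    ⟪fderiv ℝ (gradient f) x u, v⟫ = fderiv ℝ (fderiv ℝ f) x u v := by
  have : gradient f = (InnerProductSpace.toDual ℝ F).symm ∘ fderiv ℝ f := rfl
  rw [this, LinearIsometryEquiv.comp_fderiv]
  exact InnerProductSpace.toDual_symm_apply
end

namespace EuclideanSpace
variable {d : ℕ}

theorem sum_inner_single_mul_inner_single (u v : EuclideanSpace ℝ (Fin d)) :
    ∑ i, ⟪u, single i 1⟫ * ⟪v, single i 1⟫ = ⟪u, v⟫ := by
  simpa [real_inner_comm] using (basisFun (Fin d) ℝ).sum_inner_mul_inner u v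

theorem sum_fderiv_single_mul_inner_single {g : EuclideanSpace ℝ (Fin d) → ℝ}
    (x v : EuclideanSpace ℝ (Fin d)) :
    ∑ i, fderiv ℝ g x (single i 1) * ⟪v, single i 1⟫ = ⟪gradient g x, v⟫ := by
  simp_rw [← inner_gradient_left]
  exact sum_inner_single_mul_inner_single _ _

theorem sum_fderiv_single_sq {g : EuclideanSpace ℝ (Fin d) → ℝ}
    (x : EuclideanSpace ℝ (Fin d)) :
    ∑ i, fderiv ℝ g x (single i 1) ^ 2 = ‖gradient g x‖ ^ 2 := by
  simp_rw [← real_inner_self_eq_norm_sq, sq, ← inner_gradient_left]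
  exact sum_inner_single_mul_inner_single _ _

end EuclideanSpace

open EuclideanSpace

section
variable {d : ℕ} {f g ρ : EuclideanSpace ℝ (Fin d) → ℝ}
  {v w : EuclideanSpace ℝ (Fin d) → EuclideanSpace ℝ (Fin d)} {x : EuclideanSpace ℝ (Fin d)}

theorem lap_fun_add (hf : Differentiable ℝ f) (hg : Differentiable ℝ g)
    (hf' : DifferentiableAt ℝ (fderiv ℝ f) x) (hg' : DifferentiableAt ℝ (fderiv ℝ g) x) :
    lap (fun y => f y + g y) x = lap f x + lap g x := by
  have : fderiv ℝ (fun y => f y + g y) = fun y => fderiv ℝ f y + fderiv ℝ g y :=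
    funext fun y => fderiv_fun_add (hf y) (hg y)
  simp only [lap, this, fderiv_fun_add hf' hg', ← Finset.sum_add_distrib]
  rfl

theorem lap_log (hρ : Differentiable ℝ ρ) (hρ' : DifferentiableAt ℝ (fderiv ℝ ρ) x)
    (hρ0 : ∀ y, ρ y ≠ 0) :
    lap (fun y => Real.log (ρ y)) x = lap ρ x / ρ x - ‖gradient ρ x‖ ^ 2 / ρ x ^ 2 := by
  have hD : fderiv ℝ (fun y => Real.log (ρ y)) = fun y => (ρ y)⁻¹ • fderiv ℝ ρ y :=
    funext fun y => ((hρ y).hasFDerivAt.log (hρ0 y)).fderiv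
  have hinv : HasFDerivAt (fun y => (ρ y)⁻¹) (-(ρ x ^ 2)⁻¹ • fderiv ℝ ρ x) x :=
    (hasDerivAt_inv (hρ0 x)).comp_hasFDerivAt x (hρ x).hasFDerivAt
  have hD' : HasFDerivAt (fun y => (ρ y)⁻¹ • fderiv ℝ ρ y)
      ((ρ x)⁻¹ • fderiv ℝ (fderiv ℝ ρ) x
        + (-(ρ x ^ 2)⁻¹ • fderiv ℝ ρ x).smulRight (fderiv ℝ ρ x)) x :=
    hinv.smul hρ'.hasFDerivAt
  rw [lap, hD, hD'.fderiv, lap, div_eq_inv_mul, div_eq_inv_mul, ← sum_fderiv_single_sq,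
    Finset.mul_sum, Finset.mul_sum, ← Finset.sum_sub_distrib]
  refine Finset.sum_congr rfl fun i _ => ?_
  simp only [add_apply, smul_apply, ContinuousLinearMap.smulRight_apply, smul_eq_mul]
  ring

theorem diverg_gradient (g : EuclideanSpace ℝ (Fin d) → ℝ) (x : EuclideanSpace ℝ (Fin d)) :
    diverg (gradient g) x = lap g x := by
  simp only [diverg, lap, inner_fderiv_gradient]

theorem diverg_fun_smul (hρ : DifferentiableAt ℝ ρ x) (hw : DifferentiableAt ℝ w x) :
    diverg (fun y => ρ y • w y) x = ρ x * diverg w x + ⟪gradient ρ x, w x⟫ := by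
  have hD : HasFDerivAt (fun y => ρ y • w y)
      (ρ x • fderiv ℝ w x + (fderiv ℝ ρ x).smulRight (w x)) x :=
    hρ.hasFDerivAt.smul hw.hasFDerivAt
  rw [diverg, hD.fderiv, diverg, Finset.mul_sum, ← sum_fderiv_single_mul_inner_single,
    ← Finset.sum_add_distrib]
  refine Finset.sum_congr rfl fun i _ => ?_
  simp only [add_apply, smul_apply, ContinuousLinearMap.smulRight_apply, inner_add_left,
    real_inner_smul_left]

theorem diverg_fun_sub (hv : DifferentiableAt ℝ v x) (hw : DifferentiableAt ℝ w x) :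
    diverg (fun y => v y - w y) x = diverg v x - diverg w x := by
  simp only [diverg, fderiv_fun_sub hv hw, sub_apply, inner_sub_left, Finset.sum_sub_distrib]

theorem diverg_const_smul (c : ℝ) (w : EuclideanSpace ℝ (Fin d) → EuclideanSpace ℝ (Fin d))
    (x : EuclideanSpace ℝ (Fin d)) :
    diverg (fun y => c • w y) x = c * diverg w x := by
  change diverg (c • w) x = _
  simp only [diverg, fderiv_const_smul_field, Pi.smul_apply, smul_apply,
    real_inner_smul_left, Finset.mul_sum]
end

theorem stmt9_general {d : ℕ} (σ : ℝ)
    (f : ℝ → EuclideanSpace ℝ (Fin d) → EuclideanSpace ℝ (Fin d))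
    (hf : ∀ t, ContDiff ℝ 1 (f t))
    (V : ℝ → EuclideanSpace ℝ (Fin d) → ℝ)
    (hVt : ∀ x, Differentiable ℝ fun t => V t x)
    (hVx : ∀ t, ContDiff ℝ 2 (V t))
    (hHJB : ∀ t x, deriv (fun s => V s x) t + ⟪f t x, gradient (V t) x⟫
      + σ ^ 2 / 2 * lap (V t) x - σ ^ 2 / 2 * ‖gradient (V t) x‖ ^ 2 = 0)
    (ρ : ℝ → EuclideanSpace ℝ (Fin d) → ℝ)
    (hρpos : ∀ t x, 0 < ρ t x)
    (hρt : ∀ x, Differentiable ℝ fun t => ρ t x)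
    (hρx : ∀ t, ContDiff ℝ 2 (ρ t))
    (hFP : ∀ t x, deriv (fun s => ρ s x) t
      = -diverg (fun y => ρ t y • (f t y - σ ^ 2 • gradient (V t) y)) x
        + σ ^ 2 / 2 * lap (ρ t) x) :
    ∀ t x, deriv (fun s => Real.log (ρ s x) + V s x) t
      + ⟪f t x, gradient (fun y => Real.log (ρ t y) + V t y) x⟫
      + diverg (f t) x
      - σ ^ 2 / 2 * lap (fun y => Real.log (ρ t y) + V t y) x
      - σ ^ 2 / 2 * ‖gradient (fun y => Real.log (ρ t y) + V t y) x‖ ^ 2 = 0 := by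
  intro t x
  have hρ0 : ∀ y, ρ t y ≠ 0 := fun y => (hρpos t y).ne'
  have hρ : Differentiable ℝ (ρ t) := (hρx t).differentiable (by norm_num)
  have hV : Differentiable ℝ (V t) := (hVx t).differentiable (by norm_num)
  have hlogρ : Differentiable ℝ (fun y => Real.log (ρ t y)) := hρ.log hρ0
  have hρ' := (hρx t).differentiable_fderiv
  have hV' := (hVx t).differentiable_fderiv
  have hlogρ' := ((hρx t).log hρ0).differentiable_fderiv
  have hψt : deriv (fun s => Real.log (ρ s x) + V s x) t
      = deriv (fun s => ρ s x) t / ρ t x + deriv (fun s => V s x) t :=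
    (((hρt x t).hasDerivAt.log (hρ0 x)).add (hVt x t).hasDerivAt).deriv
  have hdiv : diverg (fun y => ρ t y • (f t y - σ ^ 2 • gradient (V t) y)) x
      = ρ t x * (diverg (f t) x - σ ^ 2 * lap (V t) x)
        + ⟪gradient (ρ t) x, f t x - σ ^ 2 • gradient (V t) x⟫ := by
    have hfx : DifferentiableAt ℝ (f t) x := (hf t).differentiable one_ne_zero x
    have hgV : DifferentiableAt ℝ (fun y => σ ^ 2 • gradient (V t) y) x :=
      (differentiableAt_gradient (hV' x)).const_smul (σ ^ 2)
    rw [diverg_fun_smul (hρ x) (hfx.fun_sub hgV), diverg_fun_sub hfx hgV, diverg_const_smul,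
      diverg_gradient]
  have hFPx := hFP t x
  rw [hdiv, inner_sub_right, real_inner_smul_right] at hFPx
  rw [hψt, gradient_fun_add (hlogρ x) (hV x), gradient_log (hρ x) (hρ0 x),
    lap_fun_add hlogρ hV (hlogρ' x) (hV' x), lap_log hρ (hρ' x) hρ0]
  rw [inner_add_right, real_inner_smul_right, norm_add_sq_real, norm_smul, mul_pow,
    Real.norm_eq_abs, sq_abs, real_inner_smul_left, real_inner_comm (gradient (ρ t) x)]
  linear_combination hHJB t x + (ρ t x)⁻¹ * hFPx
    - (diverg (f t) x - σ ^ 2 * lap (V t) x) * mul_inv_cancel₀ (hρ0 x)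

/-- HJB equation for the backward drift: if `V` solves the (forward) HJB equation and
`ρ > 0` solves the Fokker–Planck equation with drift `f - σ²∇V`, then `ψ := log ρ + V`
satisfies `∂ₜψ + ⟨f,∇ψ⟩ + ∇·f - (σ²/2)Δψ - (σ²/2)‖∇ψ‖² = 0`. -/
theorem stmt9 {d : ℕ} (σ : ℝ) (hσ : 0 < σ)
    (f : ℝ → EuclideanSpace ℝ (Fin d) → EuclideanSpace ℝ (Fin d))
    (hf : ∀ t, ContDiff ℝ 1 (f t))
    (V : ℝ → EuclideanSpace ℝ (Fin d) → ℝ)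
    (hVt : ∀ x, Differentiable ℝ fun t => V t x)
    (hVx : ∀ t, ContDiff ℝ 2 (V t))
    (hHJB : ∀ t x, deriv (fun s => V s x) t + ⟪f t x, gradient (V t) x⟫
      + σ ^ 2 / 2 * lap (V t) x - σ ^ 2 / 2 * ‖gradient (V t) x‖ ^ 2 = 0)
    (ρ : ℝ → EuclideanSpace ℝ (Fin d) → ℝ)
    (hρpos : ∀ t x, 0 < ρ t x)
    (hρt : ∀ x, Differentiable ℝ fun t => ρ t x)
    (hρx : ∀ t, ContDiff ℝ 2 (ρ t))
    (hFP : ∀ t x, deriv (fun s => ρ s x) t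
      = -diverg (fun y => ρ t y • (f t y - σ ^ 2 • gradient (V t) y)) x
        + σ ^ 2 / 2 * lap (ρ t) x) :
    ∀ t x, deriv (fun s => Real.log (ρ s x) + V s x) t
      + ⟪f t x, gradient (fun y => Real.log (ρ t y) + V t y) x⟫
      + diverg (f t) x
      - σ ^ 2 / 2 * lap (fun y => Real.log (ρ t y) + V t y) x
      - σ ^ 2 / 2 * ‖gradient (fun y => Real.log (ρ t y) + V t y) x‖ ^ 2 = 0 :=
  stmt9_general σ f hf V hVt hVx hHJB ρ hρpos hρt hρx hFP
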